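/- Let Ω be a nonzero finite-dimensional ℂ-vector space, T ∈ End_ℂ(Ω), and consider the ℂ-linear endomorphism A := L(0) ⊗ id_Ω + id_R ⊗ T of R ⊗_ℂ Ω. Then: (a) R ⊗_ℂ Ω is spanned by generalized eigenvectors of A (i.e., R ⊗ Ω is a logarithmic module: it is the direct sum of the generalized L(0)-eigenspaces); and (b) if there exist μ ∈ ℂ and w ∈ Ω with (T − μ·id_Ω)w ≠ 0 and (T − μ·id_Ω)²w = 0 (T admits a Jordan block of size at least 2), then there exist ν ∈ ℂ and u ∈ R ⊗_ℂ Ω with (A − ν·id)u ≠ 0 and (A − ν·id)²u = 0, so A admits a Jordan block of size at least 2 and the module is genuinely logarithmic. (This is Lemma 5.2: a restricted module W ≅ M(l) ⊗ Ω(W) is a genuine logarithmic module whenever ∑_{j∈ℕ}(ht^j)(0)² restricted to Ω(W) admits a Jordan block of size at least 2, T being (1/2l)·∑_j (ht^j)(0)²|_{Ω(W)}.) -/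
import Mathlib


open MvPolynomial TensorProduct

/-- The zero-mode Virasoro operator `L(0)` of `M(l)` in its polynomial realization:
the weighted-degree operator, acting on the monomial `X^e` by the scalar
`∑_{(i,j,n)} e(i,j,n)·n`. -/
noncomputable def L0 (d : ℕ) : Module.End ℂ (MvPolynomial (Fin d × ℕ × ℕ+) ℂ) :=
  (basisMonomials (Fin d × ℕ × ℕ+) ℂ).constr ℂ
    (fun e => (((∑ v ∈ e.support, e v * (v.2.2 : ℕ) : ℕ)) : ℂ) • monomial e (1 : ℂ))

lemma L0_monomial (d : ℕ) (e : (Fin d × ℕ × ℕ+) →₀ ℕ) :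
    L0 d (monomial e 1) =
      (((∑ v ∈ e.support, e v * (v.2.2 : ℕ) : ℕ)) : ℂ) • monomial e (1 : ℂ) := by
  have h : (monomial e (1:ℂ)) = basisMonomials (Fin d × ℕ × ℕ+) ℂ e := by
    rw [coe_basisMonomials]
  conv_lhs => rw [h]
  rw [L0, Module.Basis.constr_basis]

section Key

variable {d : ℕ} {Ω : Type*} [AddCommGroup Ω] [Module ℂ Ω]
  {T : Module.End ℂ Ω}
  {A : Module.End ℂ ((MvPolynomial (Fin d × ℕ × ℕ+) ℂ) ⊗[ℂ] Ω)}
  (hA : A = TensorProduct.map (L0 d) LinearMap.id + TensorProduct.map LinearMap.id T)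

include hA in
lemma step (e : (Fin d × ℕ × ℕ+) →₀ ℕ) (μ : ℂ) (w : Ω) :
    (A - ((((∑ v ∈ e.support, e v * (v.2.2 : ℕ) : ℕ)) : ℂ) + μ) • 1)
      ((monomial e (1:ℂ)) ⊗ₜ[ℂ] w)
    = (monomial e (1:ℂ)) ⊗ₜ[ℂ] ((T - μ • 1) w) := by
  simp only [hA, LinearMap.sub_apply, LinearMap.add_apply, map_tmul,
    LinearMap.id_apply, LinearMap.smul_apply, Module.End.one_apply, L0_monomial]
  simp only [TensorProduct.tmul_sub, TensorProduct.tmul_smul, add_smul,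
    TensorProduct.smul_tmul']
  abel

include hA in
lemma key (e : (Fin d × ℕ × ℕ+) →₀ ℕ) (μ : ℂ) (k : ℕ) (w : Ω) :
    ((A - ((((∑ v ∈ e.support, e v * (v.2.2 : ℕ) : ℕ)) : ℂ) + μ) • 1) ^ k)
      ((monomial e (1:ℂ)) ⊗ₜ[ℂ] w)
    = (monomial e (1:ℂ)) ⊗ₜ[ℂ] (((T - μ • 1) ^ k) w) := by
  induction k generalizing w with
  | zero => simp
  | succ k ih =>
    rw [pow_succ, Module.End.mul_apply, step hA, ih, ← Module.End.mul_apply, ← pow_succ]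

end Key

/-- Lemma 5.2: let `Ω` be a nonzero finite-dimensional complex vector space,
`T ∈ End(Ω)`, and `A = L(0) ⊗ id + id ⊗ T` on `R ⊗ Ω`.  Then (a) `R ⊗ Ω` is the sum of the
generalized eigenspaces of `A` (it is a logarithmic module), and (b) if `T` admits a Jordan
block of size at least `2` then so does `A` (the module is genuinely logarithmic). -/
theorem statement13 (d : ℕ) (hd : 0 < d)
    (Ω : Type*) [AddCommGroup Ω] [Module ℂ Ω] [FiniteDimensional ℂ Ω] [Nontrivial Ω]
    (T : Module.End ℂ Ω)
    (A : Module.End ℂ ((MvPolynomial (Fin d × ℕ × ℕ+) ℂ) ⊗[ℂ] Ω))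
    (hA : A = TensorProduct.map (L0 d) LinearMap.id
        + TensorProduct.map LinearMap.id T) :
    ((⨆ (ν : ℂ), ⨆ (k : ℕ), LinearMap.ker ((A - ν • 1) ^ k)) = ⊤) ∧
    ((∃ (μ : ℂ) (w : Ω), (T - μ • (1 : Module.End ℂ Ω)) w ≠ 0 ∧ ((T - μ • (1 : Module.End ℂ Ω)) ^ 2) w = 0) →
      (∃ (ν : ℂ) (u : (MvPolynomial (Fin d × ℕ × ℕ+) ℂ) ⊗[ℂ] Ω),
        (A - ν • (1 : Module.End ℂ ((MvPolynomial (Fin d × ℕ × ℕ+) ℂ) ⊗[ℂ] Ω))) u ≠ 0 ∧ ((A - ν • (1 : Module.End ℂ ((MvPolynomial (Fin d × ℕ × ℕ+) ℂ) ⊗[ℂ] Ω))) ^ 2) u = 0)) := by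
  set R := MvPolynomial (Fin d × ℕ × ℕ+) ℂ
  set S : Submodule ℂ (R ⊗[ℂ] Ω) := ⨆ (ν : ℂ), ⨆ (k : ℕ), LinearMap.ker ((A - ν • 1) ^ k)
    with hS
  -- key membership fact
  have hmem : ∀ (e : (Fin d × ℕ × ℕ+) →₀ ℕ) (μ : ℂ) (w : Ω),
      w ∈ T.maxGenEigenspace μ → (monomial e (1:ℂ)) ⊗ₜ[ℂ] w ∈ S := by
    intro e μ w hw
    obtain ⟨k, hk⟩ := (Module.End.mem_maxGenEigenspace T μ w).mp hw
    set ν : ℂ := ((((∑ v ∈ e.support, e v * (v.2.2 : ℕ) : ℕ)) : ℂ) + μ)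
    have h0 : (monomial e (1:ℂ)) ⊗ₜ[ℂ] w ∈ LinearMap.ker ((A - ν • 1) ^ k) := by
      rw [LinearMap.mem_ker, key hA e μ k w, hk, TensorProduct.tmul_zero]
    exact Submodule.mem_iSup_of_mem ν (Submodule.mem_iSup_of_mem k h0)
  constructor
  · -- part (a)
    rw [eq_top_iff]
    rintro x -
    induction x using TensorProduct.induction_on with
    | zero => exact S.zero_mem
    | add x y hx hy => exact S.add_mem hx hy
    | tmul p w =>
      have hΩ : (⨆ μ, T.maxGenEigenspace μ) = ⊤ :=
        Module.End.iSup_maxGenEigenspace_eq_top T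
      have hw : w ∈ (⨆ μ, T.maxGenEigenspace μ) := hΩ ▸ Submodule.mem_top
      have hle : (⨆ μ, T.maxGenEigenspace μ) ≤
          Submodule.comap (TensorProduct.mk ℂ R Ω p) S := by
        refine iSup_le fun μ w hw => ?_
        simp only [Submodule.mem_comap, TensorProduct.mk_apply]
        have hp : p ∈ Submodule.span ℂ (Set.range (basisMonomials (Fin d × ℕ × ℕ+) ℂ)) := by
          rw [Module.Basis.span_eq]; exact Submodule.mem_top
        refine Submodule.span_induction ?_ ?_ ?_ ?_ hp
        · rintro q ⟨e, rfl⟩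
          rw [coe_basisMonomials]
          exact hmem e μ w hw
        · rw [TensorProduct.zero_tmul]; exact S.zero_mem
        · intro a b _ _ ha hb
          rw [TensorProduct.add_tmul]; exact S.add_mem ha hb
        · intro c a _ ha
          rw [← TensorProduct.smul_tmul']; exact S.smul_mem c ha
      exact hle hw
  · -- part (b)
    rintro ⟨μ, w, hw1, hw2⟩
    refine ⟨μ, (monomial 0 (1:ℂ)) ⊗ₜ[ℂ] w, ?_, ?_⟩
    · have h1 := key hA (0 : (Fin d × ℕ × ℕ+) →₀ ℕ) μ 1 w
      simp only [Finsupp.support_zero, Finset.sum_empty, Nat.cast_zero, zero_add,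
        pow_one] at h1
      rw [h1]
      intro h
      apply hw1
      have := congrArg (fun z => (TensorProduct.lid ℂ Ω)
        ((TensorProduct.map (lcoeff ℂ 0) (LinearMap.id (R := ℂ) (M := Ω))) z)) h
      simpa [lcoeff] using this
    · have h2 := key hA (0 : (Fin d × ℕ × ℕ+) →₀ ℕ) μ 2 w
      simp only [Finsupp.support_zero, Finset.sum_empty, Nat.cast_zero, zero_add] at h2
      rw [h2, hw2, TensorProduct.tmul_zero]
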